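/- Let θ* = arcsin(1/(2√2)). Then in ℂ the following distance identities hold: |√2·e^{iπ/4} − e^{iπ/6}| = |1 − e^{iπ/6}| = √(2 − √3) and |√2·e^{iπ/4} − √2·e^{iθ*}| = |1 − √2·e^{iθ*}| = √(3 − √7); moreover √(2 − √3) < √(3 − √7). Consequently, for δ > 0, the non-overlap conditions 2·(δ/√2) ≤ d for all four of these distances d hold if and only if δ ≤ √((2 − √3)/2) (≈ 0.365), which is the maximum minimum-distance guarantee δ_max achievable by the rotation scheme in the QPSK case. -/

import Mathlib

/-!
In Cartesian form the points are `√2·e^{iπ/4} = 1 + i`, `e^{iπ/6} = (√3 + i)/2` and, because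
`sin θ* = 1/(2√2)`, `√2·e^{iθ*} = (√7 + i)/2`. Both shifted centres lie on the line `Im z = 1/2`,
the perpendicular bisector of the singular fade states `1` and `1 + i`, so each is equidistant from
them; the distance from `(√c + i)/2` to `1` is `√((c + 5)/4 − √c)`. The nearer centre, at
distance `√(2 − √3)`, is the binding constraint `√2·δ ≤ √(2 − √3)`.
-/

open Complex
open scoped Real

lemma ofReal_mul_exp_ofReal_mul_I (r θ : ℝ) :
    (r : ℂ) * exp (θ * I) = ↑(r * Real.cos θ) + ↑(r * Real.sin θ) * I := by
  rw [exp_mul_I, ← ofReal_cos, ← ofReal_sin]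
  push_cast
  ring

lemma exp_pi_div_six_mul_I : exp (↑(π / 6) * I) = ((√3 : ℝ) + I) / 2 := by
  rw [exp_mul_I, ← ofReal_cos, ← ofReal_sin, Real.cos_pi_div_six, Real.sin_pi_div_six]
  push_cast
  ring

lemma sqrt_two_mul_exp_pi_div_four_mul_I : (√2 : ℂ) * exp (↑(π / 4) * I) = 1 + I := by
  have h : √2 * (√2 / 2) = 1 := by
    rw [← mul_div_assoc, Real.mul_self_sqrt zero_le_two, div_self two_ne_zero]
  rw [ofReal_mul_exp_ofReal_mul_I, Real.cos_pi_div_four, Real.sin_pi_div_four, h]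
  push_cast
  ring

lemma sqrt_two_mul_exp_arcsin_mul_I :
    (√2 : ℂ) * exp (↑(Real.arcsin (1 / (2 * √2))) * I) = ((√7 : ℝ) + I) / 2 := by
  have hsq : (1 / (2 * √2)) ^ 2 = 1 / 8 := by
    rw [div_pow, mul_pow, Real.sq_sqrt zero_le_two]
    norm_num
  have hsin : √2 * Real.sin (Real.arcsin (1 / (2 * √2))) = 1 / 2 := by
    have hle : 1 / (2 * √2) ≤ 1 := by
      rw [← sq_le_one_iff₀ (by positivity), hsq]
      norm_num
    rw [Real.sin_arcsin (by linarith [show 0 ≤ 1 / (2 * √2) by positivity]) hle]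
    field_simp
  have hcos : √2 * Real.cos (Real.arcsin (1 / (2 * √2))) = √7 / 2 := by
    rw [Real.cos_arcsin, hsq, ← Real.sqrt_mul zero_le_two,
      show (2 : ℝ) * (1 - 1 / 8) = 7 / 2 ^ 2 by norm_num, Real.sqrt_div' _ (by positivity),
      Real.sqrt_sq zero_le_two]
  rw [ofReal_mul_exp_ofReal_mul_I, hsin, hcos]
  push_cast
  ring

-- On the line `Im z = 1/2`, `1 + i - z` is the complex conjugate of `1 - z`.
lemma norm_one_add_I_sub_eq_norm_one_sub {z : ℂ} (hz : z.im = 1 / 2) :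
    ‖1 + I - z‖ = ‖1 - z‖ := by
  rw [← norm_conj (1 - z)]
  congr 1
  apply Complex.ext <;> norm_num [hz]

lemma norm_one_sub_sqrt_add_I_div_two {c : ℝ} (hc : 0 ≤ c) :
    ‖1 - ((√c : ℝ) + I) / 2‖ = √((c + 5) / 4 - √c) := by
  rw [norm_def, normSq_apply]
  congr 1
  simp only [sub_re, one_re, div_ofNat_re, add_re, ofReal_re, I_re, add_zero, sub_im, one_im,
    div_ofNat_im, add_im, ofReal_im, I_im, zero_add]
  nlinarith [Real.sq_sqrt hc]

lemma sqrt_two_sub_sqrt_three_lt_sqrt_three_sub_sqrt_seven : √(2 - √3) < √(3 - √7) := by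
  have h3 : √3 ^ 2 = 3 := Real.sq_sqrt (by norm_num)
  have h7 : √7 < 1 + √3 := by
    rw [Real.sqrt_lt' (by positivity)]
    nlinarith [Real.sqrt_nonneg 3]
  refine Real.sqrt_lt_sqrt ?_ (by linarith)
  nlinarith [Real.sqrt_nonneg 3]

lemma two_mul_div_sqrt_two_le_sqrt_iff (δ a : ℝ) : 2 * (δ / √2) ≤ √a ↔ δ ≤ √(a / 2) := by
  have h : 2 * (δ / √2) = δ * √2 := by
    field_simp
    rw [Real.sq_sqrt zero_le_two, mul_comm]
  rw [Real.sqrt_div' a zero_le_two, le_div_iff₀ (by positivity), h]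

/-- **Example 7 (upper bound on δ for QPSK).** With `θ* = arcsin(1/(2√2))`, the distances
between the shifted circle centres `e^{iπ/6}`, `√2·e^{iθ*}` and the singular fade states
`1`, `√2·e^{iπ/4}` are `√(2 − √3)` and `√(3 − √7)` respectively, with
`√(2 − √3) < √(3 − √7)`; hence the non-overlap conditions `2·(δ/√2) ≤ d` for all four of
these distances hold exactly when `δ ≤ √((2 − √3)/2) ≈ 0.365`, the maximal minimum
distance guarantee `δ_max` for the QPSK rotation scheme. -/
theorem qpsk_delta_max
    (d₁ d₂ d₃ d₄ : ℝ)
    (hd₁ : d₁ = ‖(Real.sqrt 2 : ℂ) *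
        Complex.exp ((↑(Real.pi / 4)) * Complex.I) -
        Complex.exp ((↑(Real.pi / 6)) * Complex.I)‖)
    (hd₂ : d₂ = ‖(1 : ℂ) - Complex.exp ((↑(Real.pi / 6)) * Complex.I)‖)
    (hd₃ : d₃ = ‖(Real.sqrt 2 : ℂ) *
        Complex.exp ((↑(Real.pi / 4)) * Complex.I) -
        (Real.sqrt 2 : ℂ) *
          Complex.exp ((↑(Real.arcsin (1 / (2 * Real.sqrt 2)))) * Complex.I)‖)
    (hd₄ : d₄ = ‖(1 : ℂ) - (Real.sqrt 2 : ℂ) *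
          Complex.exp ((↑(Real.arcsin (1 / (2 * Real.sqrt 2)))) * Complex.I)‖) :
    d₁ = Real.sqrt (2 - Real.sqrt 3) ∧
    d₂ = Real.sqrt (2 - Real.sqrt 3) ∧
    d₃ = Real.sqrt (3 - Real.sqrt 7) ∧
    d₄ = Real.sqrt (3 - Real.sqrt 7) ∧
    Real.sqrt (2 - Real.sqrt 3) < Real.sqrt (3 - Real.sqrt 7) ∧
    (∀ δ : ℝ, 0 < δ →
      ((2 * (δ / Real.sqrt 2) ≤ d₁ ∧ 2 * (δ / Real.sqrt 2) ≤ d₂ ∧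
        2 * (δ / Real.sqrt 2) ≤ d₃ ∧ 2 * (δ / Real.sqrt 2) ≤ d₄) ↔
        δ ≤ Real.sqrt ((2 - Real.sqrt 3) / 2))) := by
  have dist₃ : ‖1 - ((√3 : ℝ) + I) / 2‖ = √(2 - √3) := by
    rw [norm_one_sub_sqrt_add_I_div_two (by norm_num)]
    norm_num
  have dist₇ : ‖1 - ((√7 : ℝ) + I) / 2‖ = √(3 - √7) := by
    rw [norm_one_sub_sqrt_add_I_div_two (by norm_num)]
    norm_num
  have e₂ : d₂ = √(2 - √3) := by rw [hd₂, exp_pi_div_six_mul_I, dist₃]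
  have e₄ : d₄ = √(3 - √7) := by rw [hd₄, sqrt_two_mul_exp_arcsin_mul_I, dist₇]
  have e₁ : d₁ = √(2 - √3) := by
    rw [hd₁, sqrt_two_mul_exp_pi_div_four_mul_I, exp_pi_div_six_mul_I,
      norm_one_add_I_sub_eq_norm_one_sub (by simp), dist₃]
  have e₃ : d₃ = √(3 - √7) := by
    rw [hd₃, sqrt_two_mul_exp_pi_div_four_mul_I, sqrt_two_mul_exp_arcsin_mul_I,
      norm_one_add_I_sub_eq_norm_one_sub (by simp), dist₇]
  have hlt := sqrt_two_sub_sqrt_three_lt_sqrt_three_sub_sqrt_seven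
  refine ⟨e₁, e₂, e₃, e₄, hlt, fun δ _ => ?_⟩
  rw [e₁, e₂, e₃, e₄, ← two_mul_div_sqrt_two_le_sqrt_iff]
  constructor
  · exact fun h => h.1
  · exact fun h => ⟨h, h, h.trans hlt.le, h.trans hlt.le⟩
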